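/- Let s ∈ ℝ, p ∈ (0,∞), q ∈ (p,∞), and τ ∈ (0, 1/p - 1/q]. Then the sequence space ḃ^{s, τ+1/q-1/p}_{q,q}(ℝⁿ) is continuously embedded in ḟ^{s,τ}_{p,q}(ℝⁿ), and the embedding is proper: there exists a sequence t with ‖t‖_{ḟ^{s,τ}_{p,q}} < ∞ but ‖t‖_{ḃ^{s,τ+1/q-1/p}_{q,q}} = ∞. -/

import Mathlib

open MeasureTheory ENNReal

/-- A dyadic cube `Q_{jk} = 2^{-j}([0,1)^n + k)` in `ℝⁿ`, recorded by its
generation `j ∈ ℤ` and position `k ∈ ℤⁿ`. -/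
structure DyadicCube (n : ℕ) where
  j : ℤ
  k : Fin n → ℤ

namespace DyadicCube

/-- The dyadic cube as a subset of `ℝⁿ`. -/
def toSet {n : ℕ} (Q : DyadicCube n) : Set (Fin n → ℝ) :=
  {x | ∀ i, (Q.k i : ℝ) * (2 : ℝ) ^ (-Q.j) ≤ x i ∧
        x i < ((Q.k i : ℝ) + 1) * (2 : ℝ) ^ (-Q.j)}

/-- The Lebesgue measure `|Q| = 2^{-jn}` of a dyadic cube, as an element of `ℝ≥0∞`. -/
noncomputable def vol {n : ℕ} (Q : DyadicCube n) : ℝ≥0∞ :=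
  (2 : ℝ≥0∞) ^ (-(Q.j : ℝ) * n)

/-- The characteristic function `χ_Q`, with values in `ℝ≥0∞`. -/
noncomputable def ind {n : ℕ} (Q : DyadicCube n) (x : Fin n → ℝ) : ℝ≥0∞ :=
  Q.toSet.indicator (fun _ => (1 : ℝ≥0∞)) x

end DyadicCube

open DyadicCube

/-- The coefficient `|Q|^{-s/n - 1/2}`. -/
noncomputable def coeff {n : ℕ} (s : ℝ) (Q : DyadicCube n) : ℝ≥0∞ :=
  Q.vol ^ (-(s / (n : ℝ)) - 1 / 2)

/-- The `ℓ^q`-norm `(Σ_i a_i^q)^{1/q}` of a family of extended nonnegative reals,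
with the usual modification (`sup`) when `q = ∞`. -/
noncomputable def lqSum {ι : Type*} (q : ℝ≥0∞) (a : ι → ℝ≥0∞) : ℝ≥0∞ :=
  if q = ∞ then ⨆ i, a i else (∑' i, a i ^ q.toReal) ^ (1 / q.toReal)

/-- The `L^p`-norm `(∫_A g^p dx)^{1/p}` over a set `A ⊆ ℝⁿ`, with the usual
modification (`sup` over `x ∈ A`) when `p = ∞`. -/
noncomputable def lpIntOn {n : ℕ} (p : ℝ≥0∞) (A : Set (Fin n → ℝ))
    (g : (Fin n → ℝ) → ℝ≥0∞) : ℝ≥0∞ :=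
  if p = ∞ then ⨆ x ∈ A, g x
  else (∫⁻ x in A, g x ^ p.toReal) ^ (1 / p.toReal)

/-- The Triebel–Lizorkin-type sequence norm
`‖t‖_{ḟ^{s,τ}_{p,q}} = sup_P |P|^{-τ} ( ∫_P ( Σ_{Q ⊆ P} [|Q|^{-s/n-1/2} |t_Q| χ_Q(x)]^q )^{p/q} dx )^{1/p}`,
with the usual modifications when `p = ∞` or `q = ∞`. -/
noncomputable def fNorm (n : ℕ) (s τ : ℝ) (p q : ℝ≥0∞) (t : DyadicCube n → ℂ) : ℝ≥0∞ :=
  ⨆ P : DyadicCube n, P.vol ^ (-τ) *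
    lpIntOn p P.toSet fun x =>
      lqSum q fun Q : {Q : DyadicCube n // Q.toSet ⊆ P.toSet} =>
        coeff s Q.1 * ‖t Q.1‖₊ * ind Q.1 x

/-- The Besov-type sequence norm
`‖t‖_{ḃ^{s,τ}_{p,q}} = sup_P |P|^{-τ} ( Σ_{j ≥ j_P} ( ∫_P [ Σ_{Q ⊆ P, ℓ(Q)=2^{-j}} |Q|^{-s/n-1/2} |t_Q| χ_Q(x) ]^p dx )^{q/p} )^{1/q}`,
with the usual modifications when `p = ∞` or `q = ∞`. -/
noncomputable def bNorm (n : ℕ) (s τ : ℝ) (p q : ℝ≥0∞) (t : DyadicCube n → ℂ) : ℝ≥0∞ :=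
  ⨆ P : DyadicCube n, P.vol ^ (-τ) *
    lqSum q fun j : {j : ℤ // P.j ≤ j} =>
      lpIntOn p P.toSet fun x =>
        ∑' Q : {Q : DyadicCube n // Q.toSet ⊆ P.toSet ∧ Q.j = j.1},
          coeff s Q.1 * ‖t Q.1‖₊ * ind Q.1 x

/-- The `ḟ^{σ}_{∞,∞} = ḃ^{σ}_{∞,∞}` sequence norm `sup_Q |Q|^{-σ/n - 1/2} |t_Q|`. -/
noncomputable def supNorm (n : ℕ) (σ : ℝ) (t : DyadicCube n → ℂ) : ℝ≥0∞ :=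
  ⨆ Q : DyadicCube n, coeff σ Q * ‖t Q‖₊

/-- The test sequence with `t_{R_j} = |R_j|^{s/n + 1/2 + τ - 1/p}` for
`R_j = [0,2^{-j})^n` (the dyadic cube with `k = 0`), and `t_Q = 0` otherwise. -/
noncomputable def testSeq (n : ℕ) (s τ p : ℝ) : DyadicCube n → ℂ := fun Q =>
  if Q.k = 0 then
    ((((2 : ℝ) ^ (-(Q.j : ℝ) * n)) ^ (s / n + 1 / 2 + τ - 1 / p) : ℝ) : ℂ)
  else 0

/-- The cube `R_j = [0, 2^{-j})^n`. -/
def Rcube (n : ℕ) (j : ℤ) : DyadicCube n := ⟨j, 0⟩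

/-!
The embedding is Hölder's inequality on each cube `P`: with equal indices the `ḟ`-norm is the
`ḃ`-norm, and `‖g‖_{L^p(P)} ≤ |P|^{1/p - 1/q} ‖g‖_{L^q(P)}` trades the exponent `τ` for
`τ + 1/q - 1/p` with constant `1`.

For properness, put `|Q|^{-s/n-1/2} |t_Q| = |Q|^{τ - 1/p}` on the cubes `R_j = [0, 2^{-j})^n`
and `t_Q = 0` elsewhere. A cube containing some `R_j` is some `R_{j₀}`, and for `e > 0` the sum
`Σ_{Q ⊆ R_{j₀}} (|Q|^{τ-1/p})^e |Q|` is the geometric series `Σ_{j ≥ j₀} |R_j|^{e(τ-1/p)+1}`.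
Since `ℓ^p ⊆ ℓ^q`, the `ḟ^{s,τ}_{p,q}`-quantity of `R_{j₀}` is at most the `p`-th root of the
case `e = p`, whose exponent `pτ` is positive, so the series converges to `|R_{j₀}|^{pτ}` times a
constant and the factor `|R_{j₀}|^{-τ}` cancels. For `e = q` the exponent `1 - q(1/p - τ)` is
`≤ 0`, so the series diverges.
-/

namespace DyadicCube

instance (n : ℕ) : Countable (DyadicCube n) :=
  Function.Injective.countable (f := fun Q : DyadicCube n => (Q.j, Q.k))
    fun ⟨_, _⟩ ⟨_, _⟩ h => by simpa using h

variable {n : ℕ}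

lemma toSet_eq_pi (Q : DyadicCube n) : Q.toSet = Set.univ.pi fun i =>
    Set.Ico ((Q.k i : ℝ) * 2 ^ (-Q.j)) (((Q.k i : ℝ) + 1) * 2 ^ (-Q.j)) := by
  ext x
  simp [toSet]

lemma measurableSet_toSet (Q : DyadicCube n) : MeasurableSet Q.toSet := by
  rw [toSet_eq_pi]
  exact MeasurableSet.univ_pi fun _ => measurableSet_Ico

lemma volume_toSet (Q : DyadicCube n) : volume Q.toSet = Q.vol := by
  have hside : ((2 : ℝ) ^ (-Q.j) : ℝ) = (2 : ℝ) ^ ((-Q.j : ℤ) : ℝ) :=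
    (Real.rpow_intCast 2 (-Q.j)).symm
  simp_rw [toSet_eq_pi, volume_pi_pi, Real.volume_Ico, ← sub_mul, add_sub_cancel_left, one_mul,
    Finset.prod_const, Finset.card_univ, Fintype.card_fin, hside,
    ← ENNReal.ofReal_rpow_of_pos two_pos, ENNReal.ofReal_ofNat, ← ENNReal.rpow_natCast,
    ← ENNReal.rpow_mul, vol]
  push_cast
  ring_nf

lemma vol_ne_zero (Q : DyadicCube n) : Q.vol ≠ 0 := by
  simp [vol, ENNReal.rpow_eq_zero_iff]

lemma vol_ne_top (Q : DyadicCube n) : Q.vol ≠ ∞ := by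
  simp [vol, ENNReal.rpow_eq_top_iff]

lemma vol_rpow_ne_zero (Q : DyadicCube n) (c : ℝ) : Q.vol ^ c ≠ 0 :=
  (ENNReal.rpow_pos (pos_iff_ne_zero.mpr Q.vol_ne_zero) Q.vol_ne_top).ne'

lemma measurable_ind (Q : DyadicCube n) : Measurable Q.ind :=
  measurable_const.indicator Q.measurableSet_toSet

lemma mul_ind_rpow (Q : DyadicCube n) (c : ℝ≥0∞) {e : ℝ} (he : 0 < e) (x : Fin n → ℝ) :
    (c * Q.ind x) ^ e = c ^ e * Q.ind x := by
  by_cases hx : x ∈ Q.toSet <;> simp [ind, hx, ENNReal.zero_rpow_of_pos he]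

lemma setLIntegral_tsum_mul_ind_rpow (a : DyadicCube n → ℝ≥0∞) {e : ℝ} (he : 0 < e)
    (P : DyadicCube n) :
    ∫⁻ x in P.toSet, ∑' Q : {Q : DyadicCube n // Q.toSet ⊆ P.toSet}, (a Q.1 * Q.1.ind x) ^ e =
      ∑' Q : {Q : DyadicCube n // Q.toSet ⊆ P.toSet}, a Q.1 ^ e * Q.1.vol := by
  rw [lintegral_tsum fun Q => ((Q.1.measurable_ind.const_mul _).pow_const e).aemeasurable]
  refine tsum_congr fun Q => ?_
  simp_rw [mul_ind_rpow _ _ he]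
  rw [lintegral_const_mul _ Q.1.measurable_ind]
  unfold ind
  rw [lintegral_indicator Q.1.measurableSet_toSet, setLIntegral_one,
    Measure.restrict_apply Q.1.measurableSet_toSet, Set.inter_eq_self_of_subset_left Q.2,
    volume_toSet]

end DyadicCube

lemma ENNReal.rpow_tsum_le_tsum_rpow {ι : Type*} (a : ι → ℝ≥0∞) {r : ℝ} (h0 : 0 < r)
    (h1 : r ≤ 1) : (∑' i, a i) ^ r ≤ ∑' i, a i ^ r := by
  have hsum (F : Finset ι) : (∑ i ∈ F, a i) ^ r ≤ ∑ i ∈ F, a i ^ r := by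
    classical
    induction F using Finset.induction with
    | empty => simp [ENNReal.zero_rpow_of_pos h0]
    | insert i F hi ih =>
      rw [Finset.sum_insert hi, Finset.sum_insert hi]
      exact (ENNReal.rpow_add_le_add_rpow _ _ h0.le h1).trans (add_le_add_right ih _)
  have hmono : Monotone fun x : ℝ≥0∞ => x ^ r := fun _ _ h => ENNReal.rpow_le_rpow h h0.le
  rw [ENNReal.tsum_eq_iSup_sum, hmono.map_iSup_of_continuousAt
    (ENNReal.continuous_rpow_const.continuousAt) (ENNReal.zero_rpow_of_pos h0)]
  exact iSup_le fun F => (hsum F).trans (ENNReal.sum_le_tsum F)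

lemma lqSum_ofReal_rpow_le {ι : Type*} (a : ι → ℝ≥0∞) {p q : ℝ} (hp : 0 < p) (hpq : p ≤ q) :
    lqSum (ENNReal.ofReal q) a ^ p ≤ ∑' i, a i ^ p := by
  have hq : 0 < q := hp.trans_le hpq
  rw [lqSum, if_neg ENNReal.ofReal_ne_top, ENNReal.toReal_ofReal hq.le, ← ENNReal.rpow_mul]
  calc (∑' i, a i ^ q) ^ (1 / q * p) ≤ ∑' i, (a i ^ q) ^ (1 / q * p) :=
        ENNReal.rpow_tsum_le_tsum_rpow _ (by positivity)
          (by rw [one_div_mul_eq_div]; exact div_le_one_of_le₀ hpq hq.le)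
    _ = ∑' i, a i ^ p := by
        simp_rw [← ENNReal.rpow_mul, ← mul_assoc, mul_one_div_cancel hq.ne', one_mul]

lemma lpIntOn_ofReal_eq_eLpNorm {n : ℕ} {p : ℝ} (hp : 0 < p) (A : Set (Fin n → ℝ))
    (g : (Fin n → ℝ) → ℝ≥0∞) :
    lpIntOn (ENNReal.ofReal p) A g = eLpNorm g (ENNReal.ofReal p) (volume.restrict A) := by
  rw [lpIntOn, if_neg ENNReal.ofReal_ne_top, eLpNorm_eq_lintegral_rpow_enorm_toReal
    (ENNReal.ofReal_pos.mpr hp).ne' ENNReal.ofReal_ne_top]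
  rfl

lemma lpIntOn_le_lpIntOn_mul_volume_rpow {n : ℕ} {p q : ℝ} (hp : 0 < p) (hpq : p ≤ q)
    (A : Set (Fin n → ℝ)) {g : (Fin n → ℝ) → ℝ≥0∞} (hg : Measurable g) :
    lpIntOn (ENNReal.ofReal p) A g ≤
      lpIntOn (ENNReal.ofReal q) A g * volume A ^ (1 / p - 1 / q) := by
  have hq : 0 < q := hp.trans_le hpq
  have holder := eLpNorm_le_eLpNorm_mul_rpow_measure_univ (ENNReal.ofReal_le_ofReal hpq)
    hg.aestronglyMeasurable (μ := volume.restrict A)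
  rwa [Measure.restrict_apply_univ, ENNReal.toReal_ofReal hp.le, ENNReal.toReal_ofReal hq.le,
    ← lpIntOn_ofReal_eq_eLpNorm hp, ← lpIntOn_ofReal_eq_eLpNorm hq] at holder

section Embedding

variable {n : ℕ}

lemma measurable_lqSum_mul_ind (a : DyadicCube n → ℝ≥0∞) {q : ℝ≥0∞} (hq : q ≠ ∞)
    (P : DyadicCube n) :
    Measurable fun x =>
      lqSum q fun Q : {Q : DyadicCube n // Q.toSet ⊆ P.toSet} => a Q.1 * Q.1.ind x := by
  simp only [lqSum, if_neg hq]
  exact (Measurable.tsum fun Q => (Q.1.measurable_ind.const_mul _).pow_const _).pow_const _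

lemma vol_rpow_neg_mul_lpIntOn_le (τ : ℝ) {p q : ℝ} (hp : 0 < p) (hpq : p ≤ q)
    (P : DyadicCube n) {g : (Fin n → ℝ) → ℝ≥0∞} (hg : Measurable g) :
    P.vol ^ (-τ) * lpIntOn (ENNReal.ofReal p) P.toSet g ≤
      P.vol ^ (-(τ + 1 / q - 1 / p)) * lpIntOn (ENNReal.ofReal q) P.toSet g := by
  calc P.vol ^ (-τ) * lpIntOn (ENNReal.ofReal p) P.toSet g
      ≤ P.vol ^ (-τ) * (lpIntOn (ENNReal.ofReal q) P.toSet g * P.vol ^ (1 / p - 1 / q)) := by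
        rw [← P.volume_toSet]
        gcongr
        exact lpIntOn_le_lpIntOn_mul_volume_rpow hp hpq _ hg
    _ = P.vol ^ (-(τ + 1 / q - 1 / p)) * lpIntOn (ENNReal.ofReal q) P.toSet g := by
        rw [mul_left_comm, ← ENNReal.rpow_add _ _ P.vol_ne_zero P.vol_ne_top, mul_comm]
        ring_nf

theorem fNorm_le_fNorm_of_le (s τ : ℝ) {p q : ℝ} (hp : 0 < p) (hpq : p ≤ q)
    (t : DyadicCube n → ℂ) :
    fNorm n s τ (ENNReal.ofReal p) (ENNReal.ofReal q) t ≤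
      fNorm n s (τ + 1 / q - 1 / p) (ENNReal.ofReal q) (ENNReal.ofReal q) t :=
  iSup_mono fun P => vol_rpow_neg_mul_lpIntOn_le τ hp hpq P
    (measurable_lqSum_mul_ind (fun Q => coeff s Q * ‖t Q‖₊) ENNReal.ofReal_ne_top P)

end Embedding

section Subcubes

variable {n : ℕ}

lemma lpIntOn_lqSum_mul_ind_le (a : DyadicCube n → ℝ≥0∞) {p q : ℝ} (hp : 0 < p) (hpq : p ≤ q)
    (P : DyadicCube n) :
    lpIntOn (ENNReal.ofReal p) P.toSet (fun x =>
        lqSum (ENNReal.ofReal q) fun Q : {Q : DyadicCube n // Q.toSet ⊆ P.toSet} =>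
          a Q.1 * Q.1.ind x) ≤
      (∑' Q : {Q : DyadicCube n // Q.toSet ⊆ P.toSet}, a Q.1 ^ p * Q.1.vol) ^ (1 / p) := by
  rw [lpIntOn, if_neg ENNReal.ofReal_ne_top, ENNReal.toReal_ofReal hp.le,
    ← DyadicCube.setLIntegral_tsum_mul_ind_rpow a hp P]
  gcongr with x
  exact lqSum_ofReal_rpow_le _ hp hpq

lemma lpIntOn_lqSum_mul_ind_self (a : DyadicCube n → ℝ≥0∞) {q : ℝ} (hq : 0 < q)
    (P : DyadicCube n) :
    lpIntOn (ENNReal.ofReal q) P.toSet (fun x =>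
        lqSum (ENNReal.ofReal q) fun Q : {Q : DyadicCube n // Q.toSet ⊆ P.toSet} =>
          a Q.1 * Q.1.ind x) =
      (∑' Q : {Q : DyadicCube n // Q.toSet ⊆ P.toSet}, a Q.1 ^ q * Q.1.vol) ^ (1 / q) := by
  simp only [lpIntOn, lqSum, if_neg ENNReal.ofReal_ne_top, ENNReal.toReal_ofReal hq.le,
    ← ENNReal.rpow_mul, one_div_mul_cancel hq.ne', ENNReal.rpow_one,
    DyadicCube.setLIntegral_tsum_mul_ind_rpow a hq P]

lemma mem_Rcube_toSet {j : ℤ} {x : Fin n → ℝ} :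
    x ∈ (Rcube n j).toSet ↔ ∀ i, 0 ≤ x i ∧ x i < 2 ^ (-j) := by
  simp [Rcube, DyadicCube.toSet]

lemma eq_Rcube_of_k_eq_zero {Q : DyadicCube n} (hQ : Q.k = 0) : Q = Rcube n Q.j := by
  cases Q
  subst hQ
  rfl

lemma Rcube_toSet_subset_iff (hn : 0 < n) {j : ℤ} {P : DyadicCube n} :
    (Rcube n j).toSet ⊆ P.toSet ↔ P.k = 0 ∧ P.j ≤ j := by
  have hside : (0 : ℝ) < 2 ^ (-P.j) := by positivity
  constructor
  · intro h
    have hk : P.k = 0 := by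
      funext i
      obtain ⟨hlo, hhi⟩ := h (mem_Rcube_toSet.mpr fun _ => ⟨le_rfl, by positivity⟩) i
      have hle : (P.k i : ℝ) ≤ 0 := by nlinarith
      have hgt : (-1 : ℝ) < P.k i := by nlinarith
      exact le_antisymm (by exact_mod_cast hle) (by exact_mod_cast hgt)
    refine ⟨hk, ?_⟩
    have hx : (fun _ => (2 : ℝ) ^ (-j - 1)) ∈ (Rcube n j).toSet :=
      mem_Rcube_toSet.mpr fun _ =>
        ⟨by positivity, zpow_lt_zpow_right₀ _root_.one_lt_two (by omega)⟩
    have hlt : (2 : ℝ) ^ (-j - 1) < 2 ^ (-P.j) := by simpa [hk] using (h hx ⟨0, hn⟩).2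
    have := (zpow_lt_zpow_iff_right₀ _root_.one_lt_two).mp hlt
    omega
  · rintro ⟨hk, hj⟩ x hx i
    obtain ⟨hlo, hhi⟩ := mem_Rcube_toSet.mp hx i
    simp only [hk, Pi.zero_apply, Int.cast_zero, zero_mul, zero_add, one_mul]
    exact ⟨hlo, hhi.trans_le (zpow_le_zpow_right₀ _root_.one_le_two (neg_le_neg hj))⟩

lemma tsum_subcubes_Rcube (hn : 0 < n) (f : DyadicCube n → ℝ≥0∞)
    (hf : ∀ Q : DyadicCube n, Q.k ≠ 0 → f Q = 0) (j₀ : ℤ) :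
    ∑' Q : {Q : DyadicCube n // Q.toSet ⊆ (Rcube n j₀).toSet}, f Q.1 =
      ∑' m : ℕ, f (Rcube n (j₀ + m)) := by
  let κ : ℕ → {Q : DyadicCube n // Q.toSet ⊆ (Rcube n j₀).toSet} := fun m =>
    ⟨Rcube n (j₀ + m), (Rcube_toSet_subset_iff hn).mpr ⟨rfl, show j₀ ≤ j₀ + m by omega⟩⟩
  have hκ : Function.Injective κ := fun a b h => by
    have : j₀ + a = j₀ + b := congrArg (fun Q => Q.1.j) h
    omega
  have hsupp : Function.support (fun Q : {Q : DyadicCube n // Q.toSet ⊆ (Rcube n j₀).toSet} =>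
      f Q.1) ⊆ Set.range κ := by
    intro Q hQ
    have hk : Q.1.k = 0 := by_contra fun hk => hQ (hf Q.1 hk)
    have hj : j₀ ≤ Q.1.j :=
      ((Rcube_toSet_subset_iff hn).mp (eq_Rcube_of_k_eq_zero hk ▸ Q.2)).2
    refine ⟨(Q.1.j - j₀).toNat, Subtype.ext ?_⟩
    rw [eq_Rcube_of_k_eq_zero hk]
    simp only [κ, Rcube]
    congr 1
    omega
  exact (hκ.tsum_eq hsupp).symm

lemma tsum_subcubes_eq_zero (hn : 0 < n) (f : DyadicCube n → ℝ≥0∞)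
    (hf : ∀ Q : DyadicCube n, Q.k ≠ 0 → f Q = 0) {P : DyadicCube n} (hP : P.k ≠ 0) :
    ∑' Q : {Q : DyadicCube n // Q.toSet ⊆ P.toSet}, f Q.1 = 0 :=
  ENNReal.tsum_eq_zero.mpr fun Q => hf Q.1 fun hk =>
    hP ((Rcube_toSet_subset_iff hn).mp (eq_Rcube_of_k_eq_zero hk ▸ Q.2)).1

lemma tsum_vol_Rcube_rpow (j₀ : ℤ) (c : ℝ) :
    ∑' m : ℕ, (Rcube n (j₀ + m)).vol ^ c =
      (Rcube n j₀).vol ^ c * (1 - 2 ^ (-(n * c)))⁻¹ := by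
  have hterm (m : ℕ) : (Rcube n (j₀ + m)).vol ^ c =
      (Rcube n j₀).vol ^ c * ((2 : ℝ≥0∞) ^ (-(n * c))) ^ m := by
    simp only [DyadicCube.vol, Rcube, ← ENNReal.rpow_mul, ← ENNReal.rpow_natCast,
      ← ENNReal.rpow_add _ _ two_ne_zero ENNReal.ofNat_ne_top]
    congr 1
    push_cast
    ring
  simp_rw [hterm, ENNReal.tsum_mul_left, ENNReal.tsum_geometric]

end Subcubes

section TestSequence

variable {n : ℕ} (s τ p : ℝ)

lemma coeff_mul_nnnorm_testSeq_Rcube (j : ℤ) :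
    coeff s (Rcube n j) * ‖testSeq n s τ p (Rcube n j)‖₊ = (Rcube n j).vol ^ (τ - 1 / p) := by
  have hvol : (0 : ℝ) < 2 ^ (-(j : ℝ) * n) := by positivity
  have hvol' : ENNReal.ofReal (2 ^ (-(j : ℝ) * n)) = (Rcube n j).vol := by
    rw [← ENNReal.ofReal_rpow_of_pos two_pos, ENNReal.ofReal_ofNat]
    rfl
  have hnorm : (‖testSeq n s τ p (Rcube n j)‖₊ : ℝ≥0∞) =
      (Rcube n j).vol ^ (s / n + 1 / 2 + τ - 1 / p) := by
    rw [← hvol', ENNReal.ofReal_rpow_of_pos hvol, ← enorm_eq_nnnorm, ← ofReal_norm]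
    simp only [testSeq, Rcube, if_true, Complex.norm_real,
      Real.norm_of_nonneg (Real.rpow_pos_of_pos hvol _).le]
  rw [coeff, hnorm, ← ENNReal.rpow_add _ _ (Rcube n j).vol_ne_zero (Rcube n j).vol_ne_top]
  ring_nf

lemma coeff_mul_nnnorm_testSeq_of_k_ne_zero {Q : DyadicCube n} (hQ : Q.k ≠ 0) :
    coeff s Q * ‖testSeq n s τ p Q‖₊ = 0 := by
  simp [testSeq, hQ]

lemma tsum_subcubes_Rcube_testSeq (hn : 0 < n) {e : ℝ} (he : 0 < e) (j₀ : ℤ) :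
    ∑' Q : {Q : DyadicCube n // Q.toSet ⊆ (Rcube n j₀).toSet},
        (coeff s Q.1 * ‖testSeq n s τ p Q.1‖₊) ^ e * Q.1.vol =
      (Rcube n j₀).vol ^ (e * (τ - 1 / p) + 1) *
        (1 - 2 ^ (-(n * (e * (τ - 1 / p) + 1))))⁻¹ := by
  refine (tsum_subcubes_Rcube hn (fun Q => (coeff s Q * ‖testSeq n s τ p Q‖₊) ^ e * Q.vol)
    (fun Q hQ => by simp [coeff_mul_nnnorm_testSeq_of_k_ne_zero s τ p hQ,
      ENNReal.zero_rpow_of_pos he]) j₀).trans ?_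
  simp_rw [coeff_mul_nnnorm_testSeq_Rcube, ← ENNReal.rpow_mul]
  rw [← tsum_vol_Rcube_rpow]
  refine tsum_congr fun m => ?_
  rw [ENNReal.rpow_add _ _ (DyadicCube.vol_ne_zero _) (DyadicCube.vol_ne_top _),
    ENNReal.rpow_one, mul_comm (τ - 1 / p)]

lemma tsum_subcubes_testSeq_eq_zero (hn : 0 < n) {e : ℝ} (he : 0 < e) {P : DyadicCube n}
    (hP : P.k ≠ 0) :
    ∑' Q : {Q : DyadicCube n // Q.toSet ⊆ P.toSet},
      (coeff s Q.1 * ‖testSeq n s τ p Q.1‖₊) ^ e * Q.1.vol = 0 :=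
  tsum_subcubes_eq_zero hn (fun Q => (coeff s Q * ‖testSeq n s τ p Q‖₊) ^ e * Q.vol)
    (fun Q hQ => by simp [coeff_mul_nnnorm_testSeq_of_k_ne_zero s τ p hQ,
      ENNReal.zero_rpow_of_pos he]) hP

end TestSequence

theorem fNorm_testSeq_ne_top {n : ℕ} (hn : 0 < n) (s : ℝ) {τ p q : ℝ} (hp : 0 < p)
    (hpq : p ≤ q) (hτ : 0 < τ) :
    fNorm n s τ (ENNReal.ofReal p) (ENNReal.ofReal q) (testSeq n s τ p) ≠ ∞ := by
  have hexp : p * (τ - 1 / p) + 1 = p * τ := by field_simp; ring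
  set K := (1 - (2 : ℝ≥0∞) ^ (-(n * (p * τ))))⁻¹
  have hK : K ≠ ∞ := ENNReal.inv_ne_top.mpr (tsub_pos_of_lt
    (ENNReal.rpow_lt_one_of_one_lt_of_neg ENNReal.one_lt_two
      (neg_lt_zero.mpr (by positivity)))).ne'
  refine ne_top_of_le_ne_top
    (show K ^ (1 / p) ≠ ∞ from ENNReal.rpow_ne_top_of_nonneg (by positivity) hK)
    (iSup_le fun P => ?_)
  have hsum : ∑' Q : {Q : DyadicCube n // Q.toSet ⊆ P.toSet},
      (coeff s Q.1 * ‖testSeq n s τ p Q.1‖₊) ^ p * Q.1.vol ≤ P.vol ^ (p * τ) * K := by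
    by_cases hP : P.k = 0
    · rw [eq_Rcube_of_k_eq_zero hP, tsum_subcubes_Rcube_testSeq s τ p hn hp, hexp]
    · rw [tsum_subcubes_testSeq_eq_zero s τ p hn hp hP]
      exact zero_le
  calc P.vol ^ (-τ) * lpIntOn (ENNReal.ofReal p) P.toSet (fun x =>
        lqSum (ENNReal.ofReal q) fun Q : {Q : DyadicCube n // Q.toSet ⊆ P.toSet} =>
          coeff s Q.1 * ‖testSeq n s τ p Q.1‖₊ * Q.1.ind x)
      ≤ P.vol ^ (-τ) * (P.vol ^ (p * τ) * K) ^ (1 / p) := by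
        refine mul_le_mul_right ((lpIntOn_lqSum_mul_ind_le
          (fun Q => coeff s Q * ‖testSeq n s τ p Q‖₊) hp hpq P).trans ?_) _
        exact ENNReal.rpow_le_rpow hsum (by positivity)
    _ = K ^ (1 / p) := by
        rw [ENNReal.mul_rpow_of_nonneg _ _ (by positivity), ← ENNReal.rpow_mul, ← mul_assoc,
          ← ENNReal.rpow_add _ _ P.vol_ne_zero P.vol_ne_top,
          show -τ + p * τ * (1 / p) = 0 by field_simp; ring, ENNReal.rpow_zero, one_mul]

theorem fNorm_testSeq_eq_top {n : ℕ} (hn : 0 < n) (s : ℝ) {τ p q : ℝ} (hq : 0 < q)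
    (hτ : τ ≤ 1 / p - 1 / q) :
    fNorm n s (τ + 1 / q - 1 / p) (ENNReal.ofReal q) (ENNReal.ofReal q) (testSeq n s τ p) =
      ∞ := by
  have hneg : q * (τ - 1 / p) + 1 ≤ 0 := calc
    q * (τ - 1 / p) + 1 ≤ q * -(1 / q) + 1 := by gcongr; linarith
    _ = 0 := by field_simp; ring
  have hexp : 0 ≤ -(n * (q * (τ - 1 / p) + 1)) :=
    neg_nonneg.mpr (mul_nonpos_of_nonneg_of_nonpos n.cast_nonneg hneg)
  have hdiv : (1 - (2 : ℝ≥0∞) ^ (-(n * (q * (τ - 1 / p) + 1))))⁻¹ = ∞ := by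
    rw [ENNReal.inv_eq_top, tsub_eq_zero_iff_le]
    simpa using ENNReal.rpow_le_rpow_of_exponent_le (x := 2) one_le_two hexp
  have hRcube := lpIntOn_lqSum_mul_ind_self (fun Q => coeff s Q * ‖testSeq n s τ p Q‖₊) hq
    (Rcube n 0)
  rw [tsum_subcubes_Rcube_testSeq s τ p hn hq, hdiv,
    ENNReal.mul_top (DyadicCube.vol_rpow_ne_zero _ _), ENNReal.top_rpow_of_pos (by positivity)]
    at hRcube
  refine eq_top_iff.mpr (le_iSup_of_le (Rcube n 0) ?_)
  rw [hRcube, ENNReal.mul_top (DyadicCube.vol_rpow_ne_zero _ _)]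

/-- for `s ∈ ℝ`, `p ∈ (0,∞)`, `q ∈ (p,∞)`, `τ ∈ (0, 1/p - 1/q]`, the
sequence space `ḃ^{s,τ+1/q-1/p}_{q,q}` (whose norm, with equal indices, is the
`∫_P Σ_{Q⊆P}` formula) embeds continuously into `ḟ^{s,τ}_{p,q}`, and the embedding
is proper. -/
theorem stmt4 (n : ℕ) (hn : 0 < n) (s p q τ : ℝ)
    (hp : 0 < p) (hpq : p < q) (hτ : 0 < τ) (hτ' : τ ≤ 1 / p - 1 / q) :
    (∃ C : ℝ≥0∞, C ≠ ∞ ∧ ∀ t : DyadicCube n → ℂ,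
        fNorm n s τ (ENNReal.ofReal p) (ENNReal.ofReal q) t ≤
          C * fNorm n s (τ + 1 / q - 1 / p) (ENNReal.ofReal q) (ENNReal.ofReal q) t) ∧
    ∃ t : DyadicCube n → ℂ,
      fNorm n s τ (ENNReal.ofReal p) (ENNReal.ofReal q) t ≠ ∞ ∧
      fNorm n s (τ + 1 / q - 1 / p) (ENNReal.ofReal q) (ENNReal.ofReal q) t = ∞ :=
  ⟨⟨1, one_ne_top, fun t =>
      (fNorm_le_fNorm_of_le s τ hp hpq.le t).trans_eq (one_mul _).symm⟩,
    testSeq n s τ p, fNorm_testSeq_ne_top hn s hp hpq.le hτ,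
    fNorm_testSeq_eq_top hn s (hp.trans hpq) hτ'⟩
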